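/- The set G of trees with a good branch is recognized by an unambiguous nondeterministic parity automaton: the automaton A_G (which nondeterministically tracks a branch in states g₁, g₂, sends left-diverging subtrees to the deterministic complement-checking component A_L, right-diverging subtrees to all-accepting ⊤₂, and rejects via ⊥₁ upon reading b on the tracked branch) accepts exactly the trees in G, and has at most one accepting run on every tree, since an accepting run must label precisely the left-most good branch with g-states. -/

import Mathlib

/-- Infinite binary trees over {a,b}; `true` = a, `false` = b. -/
abbrev Tree2 := List (Fin 2) → Bool

/-- The length-`n` prefix of a branch. -/
def pre (β : ℕ → Fin 2) (n : ℕ) : List (Fin 2) := List.ofFn (fun i : Fin n => β i)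

/-- A branch is good: all its finite prefixes are labelled `a` and it turns left (0)
infinitely often. -/
def Good (t : Tree2) (β : ℕ → Fin 2) : Prop :=
  (∀ n, t (pre β n) = true) ∧ (∀ m, ∃ n ≥ m, β n = 0)

/-- `β` is strictly to the left of `γ`. -/
def LeftOf (β γ : ℕ → Fin 2) : Prop :=
  ∃ n, (∀ i < n, β i = γ i) ∧ β n = 0 ∧ γ n = 1

/-- A branch passes through a node. -/
def Through (γ : ℕ → Fin 2) (v : List (Fin 2)) : Prop := pre γ v.length = v

/-- The set of trees that have a good branch. -/
def G : Set Tree2 := {t | ∃ β, Good t β}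

/-- `r` occurs infinitely often in the sequence `g`. -/
def InfOften (g : ℕ → ℕ) (r : ℕ) : Prop := ∀ m, ∃ n ≥ m, g n = r

/-- Parity condition: the maximal value occurring infinitely often is even. -/
def ParityOk (g : ℕ → ℕ) : Prop :=
  ∃ r, Even r ∧ InfOften g r ∧ ∀ r', InfOften g r' → r' ≤ r

/-- States of the unambiguous automaton `A_G`. -/
inductive QG | g1 | g2 | top2 | bot1 | l1 | l0 | top0
deriving DecidableEq

def rankG : QG → ℕ
  | .g1 => 1 | .g2 => 2 | .top2 => 2 | .bot1 => 1
  | .l1 => 1 | .l0 => 0 | .top0 => 0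

/-- Transition relation of `A_G` (`true` = a, `false` = b). -/
def deltaG : QG → Bool → QG → QG → Prop := fun q a q1 q2 =>
  match q, a with
  | .g1, true | .g2, true => (q1 = .g2 ∧ q2 = .top2) ∨ (q1 = .l1 ∧ q2 = .g1)
  | .g1, false | .g2, false => q1 = .bot1 ∧ q2 = .bot1
  | .l1, true | .l0, true => q1 = .l1 ∧ q2 = .l0
  | .l1, false | .l0, false => q1 = .top0 ∧ q2 = .top0
  | .top2, _ => q1 = .top2 ∧ q2 = .top2
  | .bot1, _ => q1 = .bot1 ∧ q2 = .bot1
  | .top0, _ => q1 = .top0 ∧ q2 = .top0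

/-- A run of `A_G` on `t` starting in state `q0`. -/
def IsRunG (t : Tree2) (q0 : QG) (ρ : List (Fin 2) → QG) : Prop :=
  ρ [] = q0 ∧ ∀ v : List (Fin 2), deltaG (ρ v) (t v) (ρ (v ++ [0])) (ρ (v ++ [1]))

/-- An accepting run: the parity condition holds on every branch. -/
def AccRunG (t : Tree2) (q0 : QG) (ρ : List (Fin 2) → QG) : Prop :=
  IsRunG t q0 ρ ∧ ∀ β : ℕ → Fin 2, ParityOk (fun n => rankG (ρ (pre β n)))

/-!
A run of `A_G` from `g₁` is determined by the branch `β` along which it keeps its g-states,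
since all other states have a single transition. That run accepts exactly when `β` is the
left-most good branch: along `β` the rank 2 recurs iff `β` is labelled `a` throughout (a `b`
leads to `⊥₁`) and turns left infinitely often, branches leaving `β` to the right end in `⊤₂`,
and a branch leaving `β` to the left enters `A_L`, which accepts it iff it is not good.
A tree in `G` has a left-most good branch, built greedily by turning left whenever a good branch
passes through the left child, and it is unique because distinct branches are comparable by
`LeftOf`.
-/

lemma pre_succ (β : ℕ → Fin 2) (n : ℕ) : pre β (n + 1) = pre β n ++ [β n] := by
  rw [pre, List.ofFn_succ']
  simp [pre]

@[simp]
lemma length_pre (β : ℕ → Fin 2) (n : ℕ) : (pre β n).length = n := by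
  simp [pre]

lemma pre_eq_pre_iff {β γ : ℕ → Fin 2} {n : ℕ} : pre β n = pre γ n ↔ ∀ i < n, β i = γ i := by
  simp [pre, List.ofFn_inj, funext_iff, Fin.forall_iff]

lemma through_pre (γ : ℕ → Fin 2) (n : ℕ) : Through γ (pre γ n) := by
  simp [Through]

lemma through_append_singleton {γ : ℕ → Fin 2} {v : List (Fin 2)} {c : Fin 2}
    (h : Through γ v) (hc : γ v.length = c) : Through γ (v ++ [c]) := by
  unfold Through at *
  simp [pre_succ, h, hc]

lemma Good.letter_of_through {t : Tree2} {γ : ℕ → Fin 2} {v : List (Fin 2)} (hγ : Good t γ)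
    (h : Through γ v) : t v = true :=
  h ▸ hγ.1 v.length

lemma eq_or_leftOf_or_leftOf (β γ : ℕ → Fin 2) : β = γ ∨ LeftOf β γ ∨ LeftOf γ β := by
  classical
  by_cases h : ∃ n, β n ≠ γ n
  · right
    have hagree : ∀ i < Nat.find h, β i = γ i := fun i hi => not_not.1 (Nat.find_min h hi)
    have hne := Nat.find_spec h
    rcases Fin.exists_fin_two.1 ⟨β (Nat.find h), rfl⟩ with hβ | hβ
    · exact Or.inl ⟨_, hagree, hβ, by omega⟩
    · exact Or.inr ⟨_, fun i hi => (hagree i hi).symm, by omega, hβ⟩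
  · push Not at h
    exact Or.inl (funext h)

def IsLeftmostGood (t : Tree2) (β : ℕ → Fin 2) : Prop :=
  Good t β ∧ ∀ γ, Good t γ → ¬ LeftOf γ β

lemma IsLeftmostGood.unique {t : Tree2} {β₁ β₂ : ℕ → Fin 2} (h₁ : IsLeftmostGood t β₁)
    (h₂ : IsLeftmostGood t β₂) : β₁ = β₂ := by
  rcases eq_or_leftOf_or_leftOf β₁ β₂ with h | h | h
  · exact h
  · exact absurd h (h₂.2 β₁ h₁.1)
  · exact absurd h (h₁.2 β₂ h₂.1)

def followNodes (f : List (Fin 2) → Fin 2) : ℕ → List (Fin 2)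
  | 0 => []
  | n + 1 => followNodes f n ++ [f (followNodes f n)]

def followBranch (f : List (Fin 2) → Fin 2) (n : ℕ) : Fin 2 :=
  f (followNodes f n)

lemma followBranch_apply (f : List (Fin 2) → Fin 2) (n : ℕ) :
    followBranch f n = f (pre (followBranch f) n) := by
  have hpre : ∀ n, pre (followBranch f) n = followNodes f n := by
    intro n
    induction n with
    | zero => rfl
    | succ n ih => rw [pre_succ, ih]; rfl
  rw [hpre]
  rfl

lemma parityOk_iff_of_eventually_le {g : ℕ → ℕ} {r N : ℕ} (hr : InfOften g r)
    (hle : ∀ n ≥ N, g n ≤ r) : ParityOk g ↔ Even r := by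
  constructor
  · rintro ⟨r', he, hr', hmax⟩
    obtain ⟨n, hn, rfl⟩ := hr' N
    rwa [le_antisymm (hle n hn) (hmax r hr)] at he
  · intro he
    refine ⟨r, he, hr, fun r' hr' => ?_⟩
    obtain ⟨n, hn, rfl⟩ := hr' N
    exact hle n hn

lemma parityOk_iff_of_eventually_eq {g : ℕ → ℕ} {r N : ℕ} (h : ∀ n ≥ N, g n = r) :
    ParityOk g ↔ Even r :=
  parityOk_iff_of_eventually_le
    (fun m => ⟨max m N, le_max_left _ _, h _ (le_max_right _ _)⟩) (fun n hn => (h n hn).le)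

def HasGoodThrough (t : Tree2) (v : List (Fin 2)) : Prop :=
  ∃ γ, Good t γ ∧ Through γ v

open Classical in
noncomputable def leftmostBranch (t : Tree2) : ℕ → Fin 2 :=
  followBranch fun v => if HasGoodThrough t (v ++ [0]) then 0 else 1

section leftmostBranch

variable {t : Tree2}

open Classical in
lemma leftmostBranch_apply (n : ℕ) : leftmostBranch t n =
    if HasGoodThrough t (pre (leftmostBranch t) n ++ [0]) then 0 else 1 :=
  followBranch_apply _ n

lemma not_leftOf_leftmostBranch {γ : ℕ → Fin 2} (hγ : Good t γ) :
    ¬ LeftOf γ (leftmostBranch t) := by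
  rintro ⟨n, hagree, hγ0, hlm⟩
  have hleft : HasGoodThrough t (pre (leftmostBranch t) n ++ [0]) := by
    refine ⟨γ, hγ, ?_⟩
    rw [← pre_eq_pre_iff.2 hagree]
    exact through_append_singleton (through_pre γ n) (by rwa [length_pre])
  rw [leftmostBranch_apply, if_pos hleft] at hlm
  exact absurd hlm (by decide)

lemma hasGoodThrough_pre_leftmostBranch (ht : t ∈ G) (n : ℕ) :
    HasGoodThrough t (pre (leftmostBranch t) n) := by
  induction n with
  | zero =>
    obtain ⟨γ, hγ⟩ := ht
    exact ⟨γ, hγ, rfl⟩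
  | succ n ih =>
    rw [pre_succ, leftmostBranch_apply n]
    split_ifs with hleft
    · exact hleft
    · obtain ⟨γ, hγ, hthr⟩ := ih
      have hγn : γ n ≠ 0 := fun hγ0 => hleft
        ⟨γ, hγ, through_append_singleton hthr (by rwa [length_pre])⟩
      exact ⟨γ, hγ, through_append_singleton hthr (by rw [length_pre]; omega)⟩

lemma isLeftmostGood_leftmostBranch (ht : t ∈ G) : IsLeftmostGood t (leftmostBranch t) := by
  have ha (n : ℕ) : t (pre (leftmostBranch t) n) = true := by
    obtain ⟨γ, hγ, hthr⟩ := hasGoodThrough_pre_leftmostBranch ht n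
    exact hγ.letter_of_through hthr
  refine ⟨⟨ha, fun m => ?_⟩, fun γ hγ => not_leftOf_leftmostBranch hγ⟩
  by_contra! hright
  obtain ⟨γ, hγ, hthr⟩ := hasGoodThrough_pre_leftmostBranch ht m
  rw [Through, length_pre, pre_eq_pre_iff] at hthr
  rcases eq_or_leftOf_or_leftOf γ (leftmostBranch t) with rfl | h | ⟨n, hagree, hlm, hγn⟩
  · obtain ⟨n, hn, h0⟩ := hγ.2 m
    exact hright n hn h0
  · exact not_leftOf_leftmostBranch hγ h
  · have hmn : m ≤ n := by
      by_contra! hnm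
      rw [hthr n hnm, hlm] at hγn
      exact absurd hγn (by decide)
    exact hright n hmn hlm

end leftmostBranch

namespace QG

def IsG (q : QG) : Prop := q = g1 ∨ q = g2

def IsL (q : QG) : Prop := q = l1 ∨ q = l0

instance : DecidablePred IsG := fun q => inferInstanceAs (Decidable (q = g1 ∨ q = g2))

end QG

/-- `deltaG` made deterministic: `d` is the direction in which a g-state sends the tracked branch,
`c` the direction of the child. -/
def child (q : QG) (a : Bool) (c d : Fin 2) : QG :=
  match q, a with
  | .g1, true | .g2, true =>
      if d = 0 then (if c = 0 then .g2 else .top2) else (if c = 0 then .l1 else .g1)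
  | .g1, false | .g2, false => .bot1
  | .l1, true | .l0, true => if c = 0 then .l1 else .l0
  | .l1, false | .l0, false => .top0
  | .top2, _ => .top2
  | .bot1, _ => .bot1
  | .top0, _ => .top0

lemma deltaG_iff_exists_child {q : QG} {a : Bool} {q₀ q₁ : QG} :
    deltaG q a q₀ q₁ ↔ ∃ d, q₀ = child q a 0 d ∧ q₁ = child q a 1 d := by
  cases q <;> cases a <;> simp [deltaG, child, Fin.exists_fin_two]

lemma child_eq_child_of_not_isG {q : QG} (hq : ¬ q.IsG) (a : Bool) (c d d' : Fin 2) :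
    child q a c d = child q a c d' := by
  cases q <;> cases a <;> simp_all [child, QG.IsG]

lemma child_eq_child_dir (q : QG) (a : Bool) (c d : Fin 2) :
    child q a c d = child q a c (if (child q a 0 d).IsG then 0 else 1) := by
  cases q <;> cases a <;> fin_cases c <;> fin_cases d <;> decide

lemma isG_of_isG_child {q : QG} {a : Bool} {c d : Fin 2} (h : (child q a c d).IsG) :
    q.IsG ∧ (if (child q a 0 d).IsG then 0 else 1 : Fin 2) = c := by
  revert h
  cases q <;> cases a <;> fin_cases c <;> fin_cases d <;> decide

section childLemmas

variable {q : QG} {a : Bool} {c d : Fin 2}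

@[simp] lemma child_top2 : child .top2 a c d = .top2 := by cases a <;> rfl
@[simp] lemma child_bot1 : child .bot1 a c d = .bot1 := by cases a <;> rfl
@[simp] lemma child_top0 : child .top0 a c d = .top0 := by cases a <;> rfl

lemma child_false_of_isG (hq : q.IsG) : child q false c d = .bot1 := by
  rcases hq with rfl | rfl <;> rfl

lemma child_true_self_of_isG (hq : q.IsG) : child q true c c = if c = 0 then .g2 else .g1 := by
  rcases hq with rfl | rfl <;> fin_cases c <;> rfl

lemma child_true_of_isG_of_ne (hq : q.IsG) (h : c ≠ d) :
    child q true c d = if c = 0 then .l1 else .top2 := by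
  rcases hq with rfl | rfl <;> fin_cases c <;> fin_cases d <;> simp_all [child]

lemma child_false_of_isL (hq : q.IsL) : child q false c d = .top0 := by
  rcases hq with rfl | rfl <;> rfl

lemma child_true_of_isL (hq : q.IsL) : child q true c d = if c = 0 then .l1 else .l0 := by
  rcases hq with rfl | rfl <;> rfl

end childLemmas

/-- The state of `runOf t β` at the node `w.reverse`; storing nodes reversed makes the recursion
structural. -/
def runRev (t : Tree2) (β : ℕ → Fin 2) : List (Fin 2) → QG
  | [] => .g1
  | c :: w => child (runRev t β w) (t w.reverse) c (β w.length)

/-- The run of `A_G` whose g-states follow the branch `β`. -/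
def runOf (t : Tree2) (β : ℕ → Fin 2) (v : List (Fin 2)) : QG :=
  runRev t β v.reverse

section runOf

variable {t : Tree2} {β γ : ℕ → Fin 2}

lemma runOf_append_singleton (v : List (Fin 2)) (c : Fin 2) :
    runOf t β (v ++ [c]) = child (runOf t β v) (t v) c (β v.length) := by
  simp [runOf, runRev]

lemma runOf_pre_succ (n : ℕ) :
    runOf t β (pre γ (n + 1)) = child (runOf t β (pre γ n)) (t (pre γ n)) (γ n) (β n) := by
  rw [pre_succ, runOf_append_singleton, length_pre]

lemma isRunG_runOf (t : Tree2) (β : ℕ → Fin 2) : IsRunG t .g1 (runOf t β) := by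
  refine ⟨rfl, fun v => ?_⟩
  rw [runOf_append_singleton, runOf_append_singleton]
  exact deltaG_iff_exists_child.2 ⟨_, rfl, rfl⟩

end runOf

/-- The branch along which the run `ρ` keeps its g-states, as long as it has any. -/
def trackedBranch (ρ : List (Fin 2) → QG) : ℕ → Fin 2 :=
  followBranch fun v => if (ρ (v ++ [0])).IsG then 0 else 1

lemma IsRunG.eq_runOf_trackedBranch {t : Tree2} {ρ : List (Fin 2) → QG}
    (h : IsRunG t .g1 ρ) : ρ = runOf t (trackedBranch ρ) := by
  set β := trackedBranch ρ
  have hβ : ∀ n, β n = if (ρ (pre β n ++ [0])).IsG then 0 else 1 := followBranch_apply _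
  suffices key : ∀ v, ρ v = runOf t β v ∧ ((ρ v).IsG → Through β v) from
    funext fun v => (key v).1
  -- g-states occur only on `β`, and there the transition taken is the one `β` records
  intro v
  induction v using List.reverseRecOn with
  | nil => exact ⟨h.1, fun _ => rfl⟩
  | append_singleton v c ih =>
    obtain ⟨d, h₀, h₁⟩ := deltaG_iff_exists_child.1 (h.2 v)
    have hc : ρ (v ++ [c]) = child (ρ v) (t v) c d := by
      fin_cases c
      exacts [h₀, h₁]
    have hdir (hg : (ρ v).IsG) : β v.length = if (child (ρ v) (t v) 0 d).IsG then 0 else 1 := by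
      rw [hβ, ih.2 hg, h₀]
    refine ⟨?_, fun hg => ?_⟩
    · rw [hc, runOf_append_singleton, ← ih.1]
      by_cases hg : (ρ v).IsG
      · rw [hdir hg, ← child_eq_child_dir]
      · exact child_eq_child_of_not_isG hg _ _ _ _
    · rw [hc] at hg
      obtain ⟨hq, hdc⟩ := isG_of_isG_child hg
      exact through_append_singleton (ih.2 hq) ((hdir hq).trans hdc)

section runOfAlong

variable {t : Tree2} {β γ : ℕ → Fin 2}

lemma runOf_pre_eq_of_sink {q : QG} (hq : ∀ a c d, child q a c d = q) {m : ℕ}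
    (hm : runOf t β (pre γ m) = q) : ∀ n ≥ m, runOf t β (pre γ n) = q := by
  intro n hn
  induction n, hn using Nat.le_induction with
  | base => exact hm
  | succ n _ ih => rw [runOf_pre_succ, ih, hq]

lemma parityOk_iff_of_sink {q : QG} (hq : ∀ a c d, child q a c d = q) {m : ℕ}
    (hm : runOf t β (pre γ m) = q) :
    ParityOk (fun n => rankG (runOf t β (pre γ n))) ↔ Even (rankG q) :=
  parityOk_iff_of_eventually_eq fun n hn => by rw [runOf_pre_eq_of_sink hq hm n hn]

lemma runOf_pre_self_isG_or_eq_bot1 (n : ℕ) :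
    (runOf t β (pre β n)).IsG ∨ runOf t β (pre β n) = .bot1 := by
  induction n with
  | zero => exact Or.inl (Or.inl rfl)
  | succ n ih =>
    rw [runOf_pre_succ]
    rcases ih with hg | hb
    · cases t (pre β n)
      · exact Or.inr (child_false_of_isG hg)
      · rw [child_true_self_of_isG hg]
        split_ifs <;> simp [QG.IsG]
    · rw [hb, child_bot1]
      exact Or.inr rfl

lemma runOf_pre_self_isG (ha : ∀ n, t (pre β n) = true) (n : ℕ) :
    (runOf t β (pre β n)).IsG := by
  refine (runOf_pre_self_isG_or_eq_bot1 n).resolve_right fun hb => ?_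
  cases n with
  | zero => cases hb
  | succ n =>
    rw [runOf_pre_succ, ha, child_true_self_of_isG (runOf_pre_self_isG ha n)] at hb
    split_ifs at hb

lemma not_parityOk_self_of_letter_eq_false {n : ℕ} (hb : t (pre β n) = false) :
    ¬ ParityOk (fun n => rankG (runOf t β (pre β n))) := by
  have hbot : runOf t β (pre β (n + 1)) = .bot1 := by
    rw [runOf_pre_succ, hb]
    rcases runOf_pre_self_isG_or_eq_bot1 n with hg | hb'
    · exact child_false_of_isG hg
    · rw [hb', child_bot1]
  rw [parityOk_iff_of_sink (fun _ _ _ => child_bot1) hbot]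
  decide

lemma parityOk_self_iff (ha : ∀ n, t (pre β n) = true) :
    ParityOk (fun n => rankG (runOf t β (pre β n))) ↔ ∀ m, ∃ n ≥ m, β n = 0 := by
  have hsucc (n : ℕ) : runOf t β (pre β (n + 1)) = if β n = 0 then .g2 else .g1 := by
    rw [runOf_pre_succ, ha, child_true_self_of_isG (runOf_pre_self_isG ha n)]
  by_cases hinf : ∀ m, ∃ n ≥ m, β n = 0
  · refine iff_of_true ?_ hinf
    refine (parityOk_iff_of_eventually_le (r := 2) (N := 0) (fun m => ?_) ?_).2 even_two
    · obtain ⟨n, hn, h0⟩ := hinf m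
      exact ⟨n + 1, by omega, by simp [hsucc, h0, rankG]⟩
    · intro n _
      rcases runOf_pre_self_isG ha n with h | h <;> simp [h, rankG]
  · refine iff_of_false ?_ hinf
    push Not at hinf
    obtain ⟨M, hM⟩ := hinf
    rw [parityOk_iff_of_eventually_eq (r := 1) (N := M + 1) fun n hn => ?_]
    · decide
    · obtain ⟨k, rfl⟩ : ∃ k, n = k + 1 := ⟨n - 1, by omega⟩
      simp [hsucc, hM k (by omega), rankG]

end runOfAlong

section complementComponent

variable {t : Tree2} {β γ : ℕ → Fin 2} {m : ℕ}

lemma parityOk_of_isL_of_letter_eq_false (hm : (runOf t β (pre γ m)).IsL) {n : ℕ} (hn : m ≤ n)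
    (hb : t (pre γ n) = false) : ParityOk (fun n => rankG (runOf t β (pre γ n))) := by
  have hstay : ∀ k ≥ m, (runOf t β (pre γ k)).IsL ∨ runOf t β (pre γ k) = .top0 := by
    intro k hk
    induction k, hk using Nat.le_induction with
    | base => exact Or.inl hm
    | succ k _ ih =>
      rw [runOf_pre_succ]
      rcases ih with hl | ht
      · cases t (pre γ k)
        · exact Or.inr (child_false_of_isL hl)
        · rw [child_true_of_isL hl]
          split_ifs <;> simp [QG.IsL]
      · rw [ht, child_top0]
        exact Or.inr rfl
  have htop : runOf t β (pre γ (n + 1)) = .top0 := by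
    rw [runOf_pre_succ, hb]
    rcases hstay n hn with hl | ht
    · exact child_false_of_isL hl
    · rw [ht, child_top0]
  exact (parityOk_iff_of_sink (fun _ _ _ => child_top0) htop).2 Even.zero

lemma parityOk_iff_of_isL (hm : (runOf t β (pre γ m)).IsL) :
    ParityOk (fun n => rankG (runOf t β (pre γ n))) ↔
      ¬ ((∀ n ≥ m, t (pre γ n) = true) ∧ ∀ k, ∃ n ≥ k, γ n = 0) := by
  by_cases hb : ∀ n ≥ m, t (pre γ n) = true
  swap
  · push Not at hb
    obtain ⟨n, hn, hf⟩ := hb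
    exact iff_of_true (parityOk_of_isL_of_letter_eq_false hm hn (by simpa using hf))
      fun h => hf (h.1 n hn)
  have hl : ∀ n ≥ m, (runOf t β (pre γ n)).IsL := by
    intro n hn
    induction n, hn using Nat.le_induction with
    | base => exact hm
    | succ n hn ih =>
      rw [runOf_pre_succ, hb n hn, child_true_of_isL ih]
      split_ifs <;> simp [QG.IsL]
  have hsucc (n : ℕ) (hn : m ≤ n) :
      runOf t β (pre γ (n + 1)) = if γ n = 0 then .l1 else .l0 := by
    rw [runOf_pre_succ, hb n hn, child_true_of_isL (hl n hn)]
  by_cases hinf : ∀ k, ∃ n ≥ k, γ n = 0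
  · refine iff_of_false ?_ (not_not.2 ⟨hb, hinf⟩)
    rw [parityOk_iff_of_eventually_le (r := 1) (N := m) (fun k => ?_) fun n hn => ?_]
    · decide
    · obtain ⟨n, hn, h0⟩ := hinf (max k m)
      exact ⟨n + 1, by omega, by simp [hsucc n (by omega), h0, rankG]⟩
    · rcases hl n hn with h | h <;> simp [h, rankG]
  · refine iff_of_true ?_ fun h => hinf h.2
    push Not at hinf
    obtain ⟨M, hM⟩ := hinf
    refine (parityOk_iff_of_eventually_eq (r := 0) (N := max M m + 1) fun n hn => ?_).2 Even.zero
    obtain ⟨k, rfl⟩ : ∃ k, n = k + 1 := ⟨n - 1, by omega⟩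
    simp [hsucc k (by omega), hM k (by omega), rankG]

end complementComponent

section divergence

variable {t : Tree2} {β γ : ℕ → Fin 2}

lemma runOf_pre_succ_of_diverge (ha : ∀ n, t (pre β n) = true) {n : ℕ}
    (hagree : ∀ i < n, γ i = β i) (hne : γ n ≠ β n) :
    runOf t β (pre γ (n + 1)) = if γ n = 0 then .l1 else .top2 := by
  rw [runOf_pre_succ, pre_eq_pre_iff.2 hagree, ha,
    child_true_of_isG_of_ne (runOf_pre_self_isG ha n) hne]

lemma parityOk_iff_of_leftOf (ha : ∀ n, t (pre β n) = true) (h : LeftOf γ β) :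
    ParityOk (fun n => rankG (runOf t β (pre γ n))) ↔ ¬ Good t γ := by
  obtain ⟨n, hagree, hγ, hβ⟩ := h
  have hl : runOf t β (pre γ (n + 1)) = .l1 := by
    rw [runOf_pre_succ_of_diverge ha hagree (by rw [hγ, hβ]; decide), if_pos hγ]
  rw [parityOk_iff_of_isL (Or.inl hl : QG.IsL _), Good]
  suffices hlet : (∀ k ≥ n + 1, t (pre γ k) = true) → ∀ k, t (pre γ k) = true by
    exact not_congr ⟨fun h => ⟨hlet h.1, h.2⟩, fun h => ⟨fun k _ => h.1 k, h.2⟩⟩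
  intro hlate k
  rcases le_or_gt k n with hk | hk
  · rw [pre_eq_pre_iff.2 fun i hi => hagree i (by omega)]
    exact ha k
  · exact hlate k hk

lemma parityOk_of_rightOf (ha : ∀ n, t (pre β n) = true) (h : LeftOf β γ) :
    ParityOk (fun n => rankG (runOf t β (pre γ n))) := by
  obtain ⟨n, hagree, hβ, hγ⟩ := h
  have htop : runOf t β (pre γ (n + 1)) = .top2 := by
    rw [runOf_pre_succ_of_diverge ha (fun i hi => (hagree i hi).symm) (by rw [hγ, hβ]; decide),
      hγ]
    rfl
  exact (parityOk_iff_of_sink (fun _ _ _ => child_top2) htop).2 even_two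

end divergence

lemma accRunG_runOf_iff {t : Tree2} {β : ℕ → Fin 2} :
    AccRunG t .g1 (runOf t β) ↔ IsLeftmostGood t β := by
  constructor
  · intro hacc
    have ha (n : ℕ) : t (pre β n) = true := by
      by_contra hb
      exact not_parityOk_self_of_letter_eq_false (by simpa using hb) (hacc.2 β)
    refine ⟨⟨ha, (parityOk_self_iff ha).1 (hacc.2 β)⟩, fun γ hγ hleft => ?_⟩
    exact (parityOk_iff_of_leftOf ha hleft).1 (hacc.2 γ) hγ
  · rintro ⟨hgood, hleftmost⟩
    refine ⟨isRunG_runOf t β, fun γ => ?_⟩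
    rcases eq_or_leftOf_or_leftOf γ β with rfl | h | h
    · exact (parityOk_self_iff hgood.1).2 hgood.2
    · exact (parityOk_iff_of_leftOf hgood.1 h).2 fun hγ => hleftmost γ hγ h
    · exact parityOk_of_rightOf hgood.1 h

lemma AccRunG.isLeftmostGood_trackedBranch {t : Tree2} {ρ : List (Fin 2) → QG}
    (h : AccRunG t .g1 ρ) : IsLeftmostGood t (trackedBranch ρ) := by
  rw [← accRunG_runOf_iff, ← h.1.eq_runOf_trackedBranch]
  exact h

/-- `A_G` recognizes `G` and is unambiguous: it accepts exactly the trees with a good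
branch, and has at most one accepting run on every tree. -/
theorem AG_recognizes_G_unambiguously :
    (∀ t : Tree2, (∃ ρ, AccRunG t QG.g1 ρ) ↔ t ∈ G) ∧
    (∀ (t : Tree2) ρ₁ ρ₂, AccRunG t QG.g1 ρ₁ → AccRunG t QG.g1 ρ₂ → ρ₁ = ρ₂) := by
  refine ⟨fun t => ⟨fun ⟨ρ, hρ⟩ => ?_, fun ht => ?_⟩, fun t ρ₁ ρ₂ h₁ h₂ => ?_⟩
  · exact ⟨_, hρ.isLeftmostGood_trackedBranch.1⟩
  · exact ⟨_, accRunG_runOf_iff.2 (isLeftmostGood_leftmostBranch ht)⟩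
  · rw [h₁.1.eq_runOf_trackedBranch, h₂.1.eq_runOf_trackedBranch,
      h₁.isLeftmostGood_trackedBranch.unique h₂.isLeftmostGood_trackedBranch]
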